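/- Let f be a fitness function on the biallelic hypercube {0,1}^L with no two adjacent genotypes having equal fitness, and suppose every square motif exhibits magnitude epistasis or simple sign epistasis (no RSE). Then from any genotype g, the minimum length of an accessible (strictly fitness-increasing) path from g to the unique peak equals the Hamming distance from g to the peak. -/

import Mathlib

/-- Flip coordinate `i` of a biallelic genotype. -/
def flp {L : ℕ} (g : Fin L → Bool) (i : Fin L) : Fin L → Bool :=
  Function.update g i (!g i)

/-- Hamming distance between genotypes. -/
def hamming {L : ℕ} (g h : Fin L → Bool) : ℕ :=
  (Finset.univ.filter fun i => g i ≠ h i).card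

/-- Endpoint of the path obtained by applying a list of coordinate flips. -/
def walk {L : ℕ} (g : Fin L → Bool) : List (Fin L) → (Fin L → Bool)
  | [] => g
  | i :: l => walk (flp g i) l

/-- A path (list of flips) is accessible if fitness strictly increases at every step. -/
def Accessible {L : ℕ} (f : (Fin L → Bool) → ℝ) : (Fin L → Bool) → List (Fin L) → Prop
  | _, [] => True
  | g, i :: l => f g < f (flp g i) ∧ Accessible f (flp g i) l

/-- Mutation `i` changes the sign of its fitness effect depending on the presence of
mutation `j`. -/
def SignFlip {L : ℕ} (f : (Fin L → Bool) → ℝ) (g : Fin L → Bool) (i j : Fin L) : Prop :=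
  ¬ ((f g < f (flp g i)) ↔ (f (flp g j) < f (flp (flp g j) i)))

/-- Simple sign epistasis on the square motif at background `g`, loci `i ≠ j`:
exactly one of the two mutations changes sign. -/
def SSE {L : ℕ} (f : (Fin L → Bool) → ℝ) (g : Fin L → Bool) (i j : Fin L) : Prop :=
  Xor' (SignFlip f g i j) (SignFlip f g j i)

/-- Reciprocal sign epistasis: both mutations change sign. -/
def RSE {L : ℕ} (f : (Fin L → Bool) → ℝ) (g : Fin L → Bool) (i j : Fin L) : Prop :=
  SignFlip f g i j ∧ SignFlip f g j i

/-- A peak (local fitness maximum). -/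
def Peak {L : ℕ} (f : (Fin L → Bool) → ℝ) (g : Fin L → Bool) : Prop :=
  ∀ i, f (flp g i) < f g

section basics
variable {L : ℕ}

lemma flp_self (g : Fin L → Bool) (i : Fin L) : flp g i i = !g i := by
  simp [flp]

lemma flp_other (g : Fin L → Bool) {i j : Fin L} (h : j ≠ i) : flp g i j = g j := by
  simp [flp, Function.update_of_ne h]

lemma flp_flp_same (g : Fin L → Bool) (i : Fin L) : flp (flp g i) i = g := by
  funext j
  by_cases h : j = i
  · subst h; simp [flp_self]
  · simp [flp_other g h, flp_other _ h]

lemma flp_comm (g : Fin L → Bool) {i j : Fin L} (h : i ≠ j) :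
    flp (flp g i) j = flp (flp g j) i := by
  funext k
  by_cases hk : k = i
  · subst hk
    rw [flp_other _ h, flp_self, flp_self, flp_other _ h]
  · by_cases hk2 : k = j
    · subst hk2
      rw [flp_self, flp_other _ h.symm, flp_other _ h.symm, flp_self]
    · rw [flp_other _ hk2, flp_other _ hk, flp_other _ hk, flp_other _ hk2]

lemma walk_append (g : Fin L → Bool) (l1 l2 : List (Fin L)) :
    walk g (l1 ++ l2) = walk (walk g l1) l2 := by
  induction l1 generalizing g with
  | nil => rfl
  | cons i l ih => simp [walk, ih]

end basics

section ham
variable {L : ℕ}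

lemma hamming_eq_zero {g p : Fin L → Bool} (h : hamming g p = 0) : g = p := by
  funext i
  by_contra hi
  have : i ∈ Finset.univ.filter fun i => g i ≠ p i := by simp [hi]
  rw [hamming, Finset.card_eq_zero] at h
  simp [h] at this

lemma hamming_flp_mem {g p : Fin L → Bool} {i : Fin L} (h : g i ≠ p i) :
    hamming g p = hamming (flp g i) p + 1 := by
  unfold hamming
  have hset : (Finset.univ.filter fun j => flp g i j ≠ p j)
      = (Finset.univ.filter fun j => g j ≠ p j).erase i := by
    ext j
    by_cases hj : j = i
    · subst hj
      simp [flp_self]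
      revert h; cases g j <;> cases p j <;> simp
    · simp [flp_other g hj, hj]
  rw [hset, Finset.card_erase_of_mem (by simp [h])]
  have : i ∈ Finset.univ.filter fun j => g j ≠ p j := by simp [h]
  have hpos : 0 < (Finset.univ.filter fun j => g j ≠ p j).card :=
    Finset.card_pos.mpr ⟨i, this⟩
  omega

lemma hamming_flp_le (g p : Fin L → Bool) (i : Fin L) :
    hamming g p ≤ hamming (flp g i) p + 1 := by
  by_cases h : g i = p i
  · -- flipping a matching coordinate increases distance by one
    have h2 : flp g i i ≠ p i := by
      rw [flp_self]; revert h; cases g i <;> cases p i <;> simp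
    have := hamming_flp_mem (g := flp g i) (p := p) (i := i) h2
    rw [flp_flp_same] at this
    omega
  · rw [hamming_flp_mem h]

lemma hamming_le_length {p : Fin L → Bool} :
    ∀ (l : List (Fin L)) (g : Fin L → Bool), walk g l = p → hamming g p ≤ l.length := by
  intro l
  induction l with
  | nil => intro g h; simp [walk] at h; subst h; simp [hamming]
  | cons i l ih =>
    intro g h
    have := ih (flp g i) h
    have := hamming_flp_le g p i
    simp only [List.length_cons]
    omega

lemma exists_ne_of_ne {g p : Fin L → Bool} (h : g ≠ p) : ∃ i, g i ≠ p i := by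
  by_contra hc
  push_neg at hc
  exact h (funext hc)

/-- direct path from g to p as permutation of differing coordinates -/
lemma exists_direct_path (p : Fin L → Bool) :
    ∀ (n : ℕ) (g : Fin L → Bool), hamming g p = n →
      ∃ l : List (Fin L), l.Nodup ∧ (∀ x ∈ l, g x ≠ p x) ∧ walk g l = p ∧ l.length = n := by
  intro n
  induction n with
  | zero => intro g h; exact ⟨[], by simp, by simp, hamming_eq_zero h, rfl⟩
  | succ n ih =>
    intro g h
    have hgp : g ≠ p := by
      intro he; subst he; simp [hamming] at h
    obtain ⟨i, hi⟩ := exists_ne_of_ne hgp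
    have hham := hamming_flp_mem (p := p) hi
    obtain ⟨l, hnd, hdif, hw, hlen⟩ := ih (flp g i) (by omega)
    refine ⟨i :: l, ?_, ?_, hw, by simp [hlen]⟩
    · refine List.nodup_cons.mpr ⟨?_, hnd⟩
      intro hmem
      have := hdif i hmem
      rw [flp_self] at this
      revert hi this; cases g i <;> cases p i <;> simp
    · intro x hx
      rcases List.mem_cons.mp hx with h1 | h1
      · subst h1; exact hi
      · have := hdif x h1
        by_cases hxi : x = i
        · subst hxi; exact hi
        · rwa [flp_other g hxi] at this

end ham

section core
variable {L : ℕ} (f : (Fin L → Bool) → ℝ)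

/-- rank of a genotype: number of genotypes at least as fit -/
noncomputable def rnk (v : Fin L → Bool) : ℕ := (Finset.univ.filter fun h => f v ≤ f h).card

/-- sum of ranks of interior vertices of a path -/
noncomputable def msr (g : Fin L → Bool) (l : List (Fin L)) : ℕ :=
  ∑ t ∈ Finset.range (l.length - 1), rnk f (walk g (l.take (t+1)))

lemma rnk_lt {u w : Fin L → Bool} (h : f u < f w) : rnk f w < rnk f u := by
  apply Finset.card_lt_card
  constructor
  · intro x hx
    simp only [Finset.mem_filter, Finset.mem_univ, true_and] at hx ⊢
    linarith
  · intro hsub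
    have : u ∈ Finset.univ.filter fun h' => f w ≤ f h' :=
      hsub (by simp)
    simp only [Finset.mem_filter, Finset.mem_univ, true_and] at this
    linarith

lemma take_pre_eq (pre rest : List (Fin L)) {t : ℕ} (h : t ≤ pre.length) :
    (pre ++ rest).take t = pre.take t := by
  simp [List.take_append, Nat.sub_eq_zero_of_le h]

lemma take_mid_eq (pre rest : List (Fin L)) (x : Fin L) :
    (pre ++ x :: rest).take (pre.length + 1) = pre ++ [x] := by
  rw [List.take_append]
  congr 1
  · exact List.take_of_length_le (by omega)
  · simp

lemma take_mid2_eq (pre rest : List (Fin L)) (x y : Fin L) :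
    (pre ++ x :: y :: rest).take (pre.length + 2) = pre ++ [x, y] := by
  rw [List.take_append]
  congr 1
  · exact List.take_of_length_le (by omega)
  · simp

lemma walk_take_swap (g : Fin L → Bool) (pre post : List (Fin L)) {x y : Fin L}
    (hxy : x ≠ y) {t : ℕ} (ht : t ≠ pre.length + 1) :
    walk g ((pre ++ y :: x :: post).take t) = walk g ((pre ++ x :: y :: post).take t) := by
  rcases le_or_gt t pre.length with h | h
  · rw [take_pre_eq _ _ h, take_pre_eq _ _ h]
  · have h2 : pre.length + 2 ≤ t := by omega
    obtain ⟨s, hs⟩ : ∃ s, t - pre.length = s + 2 := ⟨t - pre.length - 2, by omega⟩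
    rw [List.take_append, List.take_append, hs,
      List.take_of_length_le (show pre.length ≤ t from by omega)]
    simp only [List.take_succ_cons]
    rw [walk_append, walk_append]
    simp only [walk]
    rw [flp_comm (walk g pre) (Ne.symm hxy)]

end core

section ridge
variable {L : ℕ} {f : (Fin L → Bool) → ℝ}

lemma no_ridge (hne : ∀ (g : Fin L → Bool) (i : Fin L), f (flp g i) ≠ f g)
    (hnorse : ∀ (g : Fin L → Bool) (i j : Fin L), i ≠ j → ¬ RSE f g i j)
    {p g : Fin L → Bool} (hp : Peak f p)
    (hg : ∀ i, g i ≠ p i → f (flp g i) < f g) (hgp : g ≠ p) :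
    ∀ (n : ℕ) (l : List (Fin L)), msr f g l ≤ n → l.Nodup →
      (∀ x ∈ l, g x ≠ p x) → walk g l = p → False := by
  intro n
  induction n using Nat.strong_induction_on with
  | _ n ih =>
  intro l hmsr hnd hdif hw
  -- l is nonempty
  have hlen1 : 1 ≤ l.length := by
    rcases l with _ | ⟨i, l⟩
    · exact absurd hw hgp
    · simp
  rcases eq_or_lt_of_le hlen1 with hlen | hlen2
  · -- length 1 : l = [i], contradiction between the two peaks
    obtain ⟨i, rfl⟩ := List.length_eq_one_iff.mp hlen.symm
    have h1 : f (flp g i) < f g := hg i (hdif i (by simp))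
    have hwi : walk g [i] = flp g i := rfl
    rw [hwi] at hw
    have h2 : f (flp p i) < f p := hp i
    rw [← hw, flp_flp_same] at h2
    rw [hw] at h1 h2
    linarith
  · -- length ≥ 2
    set d := l.length with hd
    have hd2 : 2 ≤ d := hlen2
    -- pick the interior vertex of minimal fitness
    obtain ⟨k0, hk0mem, hmin⟩ := Finset.exists_min_image (Finset.range (d-1))
      (fun t => f (walk g (l.take (t+1)))) ⟨0, by simp; omega⟩
    have hk0 : k0 < d - 1 := Finset.mem_range.mp hk0mem
    -- decompose l = pre ++ i :: j :: post
    have hdroplen : (l.drop k0).length = d - k0 := by simp [hd]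
    rcases hdrop : l.drop k0 with _ | ⟨i, rest⟩
    · rw [hdrop] at hdroplen; simp at hdroplen; omega
    rcases hrest : rest with _ | ⟨j, post⟩
    · rw [hdrop, hrest] at hdroplen; simp at hdroplen; omega
    subst hrest
    set pre := l.take k0 with hpre_def
    have hl : l = pre ++ i :: j :: post := by
      rw [hpre_def, ← hdrop, List.take_append_drop]
    have hpre : pre.length = k0 := by
      rw [hpre_def, List.length_take]; omega
    set u := walk g pre with hu_def
    set m := flp u i with hm_def
    set b := flp m j with hb_def
    set m' := flp u j with hm'_def
    -- i ≠ j
    have hij : i ≠ j := by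
      have : (i :: j :: post).Nodup := (hl ▸ hnd).of_append_right
      intro h; rw [h] at this; simp at this
    -- vertex value computations
    have hvk : walk g (l.take (k0+1)) = m := by
      rw [hl, show k0 + 1 = pre.length + 1 by omega, take_mid_eq, walk_append]
      rfl
    have hvk1 : walk g (l.take (k0+2)) = b := by
      rw [hl, show k0 + 2 = pre.length + 2 by omega, take_mid2_eq, walk_append]
      rfl
    -- (A) f m < f u
    have hA : f m < f u := by
      rcases Nat.eq_zero_or_pos k0 with h0 | h0
      · have hupre : u = g := by
          rw [hu_def, hpre_def, h0]; rfl
        have himem : i ∈ l := by rw [hl]; simp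
        have := hg i (hdif i himem)
        rw [← hupre] at this
        exact this
      · obtain ⟨s, rfl⟩ : ∃ s, k0 = s + 1 := ⟨k0 - 1, by omega⟩
        have hsle := hmin s (Finset.mem_range.mpr (by omega))
        rw [hvk] at hsle
        have : walk g (l.take (s+1)) = u := by rw [hu_def, hpre_def]
        rw [this] at hsle
        exact lt_of_le_of_ne hsle (hne u i)
    -- (B) f m < f b
    have hB : f m < f b := by
      rcases eq_or_lt_of_le (show k0 + 2 ≤ d by omega) with hEnd | hMid
      · have hbp : b = p := by
          rw [← hvk1, show k0 + 2 = d from hEnd, hd, List.take_length, hw]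
        have hmb : flp b j = m := by rw [hb_def, flp_flp_same]
        have h2 := hp j
        rw [← hbp, hmb] at h2
        exact h2
      · have hsle := hmin (k0+1) (Finset.mem_range.mpr (by omega))
        rw [hvk, show k0 + 1 + 1 = k0 + 2 by omega, hvk1] at hsle
        exact lt_of_le_of_ne hsle (by rw [hb_def]; exact (hne m j).symm)
    -- the fourth corner
    have hbm' : b = flp m' i := by
      rw [hb_def, hm_def, hm'_def, flp_comm u hij]
    by_cases hcase : f m' < f b ∧ f m' < f u
    · -- RSE at background u on loci i j
      apply hnorse u i j hij
      constructor
      · intro hiff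
        have := hiff.mpr (by rw [← hbm']; exact hcase.1)
        exact absurd this (by rw [← hm_def]; linarith)
      · intro hiff
        have := hiff.mpr (by rw [← hm_def, ← hb_def]; exact hB)
        rw [← hm'_def] at this
        linarith [hcase.2]
    · -- swap the two flips, measure decreases
      have hm'b : f m' ≠ f b := by rw [hbm']; exact (hne m' i).symm
      have hm'u : f m' ≠ f u := hne u j
      push_neg at hcase
      have hmm' : f m < f m' := by
        rcases lt_or_gt_of_ne hm'b with h | h
        · have := hcase h
          rcases lt_or_gt_of_ne hm'u with h2 | h2
          · linarith
          · linarith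
        · linarith
      set l' := pre ++ j :: i :: post with hl'_def
      have hperm : l.Perm l' := by
        rw [hl, hl'_def]
        exact (List.Perm.swap j i post).append_left pre
      have hnd' : l'.Nodup := hperm.nodup hnd
      have hdif' : ∀ x ∈ l', g x ≠ p x := fun x hx => hdif x (hperm.mem_iff.mpr hx)
      have hw' : walk g l' = p := by
        rw [hl'_def, walk_append]
        simp only [walk]
        rw [flp_comm u hij.symm]
        rw [hl, walk_append] at hw
        simp only [walk] at hw
        exact hw
      have hlen' : l'.length = d := by
        rw [hl'_def, hd, hl]; simp
      -- measure strictly decreases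
      have hv' : walk g (l'.take (k0+1)) = m' := by
        rw [hl'_def, show k0 + 1 = pre.length + 1 by rw [hpre], take_mid_eq, walk_append]
        rfl
      have hmsrlt : msr f g l' < msr f g l := by
        rw [msr, msr, hlen', ← hd]
        apply Finset.sum_lt_sum
        · intro t htmem
          by_cases ht : t = k0
          · rw [ht, hv', hvk]
            exact le_of_lt (rnk_lt f hmm')
          · have heq : walk g (l'.take (t+1)) = walk g (l.take (t+1)) := by
              rw [hl'_def, hl]
              exact walk_take_swap g pre post hij (by omega)
            rw [heq]
        · exact ⟨k0, hk0mem, by rw [hv', hvk]; exact rnk_lt f hmm'⟩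
      exact ih (msr f g l') (by omega) l' le_rfl hnd' hdif' hw'

end ridge

section assemble
variable {L : ℕ} {f : (Fin L → Bool) → ℝ}

lemma subpeak_eq (hne : ∀ (g : Fin L → Bool) (i : Fin L), f (flp g i) ≠ f g)
    (hnorse : ∀ (g : Fin L → Bool) (i j : Fin L), i ≠ j → ¬ RSE f g i j)
    {p g : Fin L → Bool} (hp : Peak f p)
    (hg : ∀ i, g i ≠ p i → f (flp g i) < f g) : g = p := by
  by_contra hgp
  obtain ⟨l, hnd, hdif, hw, -⟩ := exists_direct_path p (hamming g p) g rfl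
  exact no_ridge hne hnorse hp hg hgp (msr f g l) l le_rfl hnd hdif hw

lemma step_lemma (hne : ∀ (g : Fin L → Bool) (i : Fin L), f (flp g i) ≠ f g)
    (hnorse : ∀ (g : Fin L → Bool) (i j : Fin L), i ≠ j → ¬ RSE f g i j)
    {p g : Fin L → Bool} (hp : Peak f p) (hgp : g ≠ p) :
    ∃ i, g i ≠ p i ∧ f g < f (flp g i) := by
  by_contra hc
  push_neg at hc
  apply hgp
  apply subpeak_eq hne hnorse hp
  intro i hi
  exact lt_of_le_of_ne (hc i hi) (hne g i)

lemma exists_accessible (hne : ∀ (g : Fin L → Bool) (i : Fin L), f (flp g i) ≠ f g)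
    (hnorse : ∀ (g : Fin L → Bool) (i j : Fin L), i ≠ j → ¬ RSE f g i j)
    {p : Fin L → Bool} (hp : Peak f p) :
    ∀ (n : ℕ) (g : Fin L → Bool), hamming g p = n →
      ∃ l : List (Fin L), l.length = n ∧ walk g l = p ∧ Accessible f g l := by
  intro n
  induction n with
  | zero =>
    intro g h
    exact ⟨[], rfl, hamming_eq_zero h, trivial⟩
  | succ n ih =>
    intro g h
    have hgp : g ≠ p := by
      intro he; subst he; simp [hamming] at h
    obtain ⟨i, hi, hfi⟩ := step_lemma hne hnorse hp hgp
    have hham := hamming_flp_mem (p := p) hi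
    obtain ⟨l, hlen, hw, hacc⟩ := ih (flp g i) (by omega)
    exact ⟨i :: l, by simp [hlen], hw, hfi, hacc⟩

end assemble


/-- with no RSE, the minimum length of an accessible path from any genotype
to the unique peak equals the Hamming distance to the peak. -/
theorem stmt_19 (L : ℕ) (f : (Fin L → Bool) → ℝ)
    (hne : ∀ (g : Fin L → Bool) (i : Fin L), f (flp g i) ≠ f g)
    (hnorse : ∀ (g : Fin L → Bool) (i j : Fin L), i ≠ j → ¬ RSE f g i j) :
    ∃ p : Fin L → Bool, Peak f p ∧ (∀ q : Fin L → Bool, Peak f q → q = p) ∧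
      ∀ g : Fin L → Bool,
        IsLeast {n : ℕ | ∃ l : List (Fin L),
          l.length = n ∧ walk g l = p ∧ Accessible f g l} (hamming g p) := by
  obtain ⟨p, -, hpmax⟩ := Finset.exists_max_image Finset.univ f ⟨fun _ => false, Finset.mem_univ _⟩
  have hp : Peak f p := fun i => lt_of_le_of_ne (hpmax _ (Finset.mem_univ _)) (hne p i)
  refine ⟨p, hp, ?_, ?_⟩
  · intro q hq
    exact subpeak_eq hne hnorse hp (fun i _ => hq i)
  · intro g
    constructor
    · obtain ⟨l, hlen, hw, hacc⟩ := exists_accessible hne hnorse hp (hamming g p) g rfl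
      exact ⟨l, hlen, hw, hacc⟩
    · rintro n ⟨l, hlen, hw, -⟩
      rw [← hlen]
      exact hamming_le_length l g hw
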